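/- Let ρ(s) = s^q (c₀ + ∑_{i≥1} cᵢ sⁱ) with c₀ ≠ 0 be a convergent power series and p, q positive integers, and suppose H*(s^p, ρ(s)) = 0 identically for s near 0, where H*(X,Y) is a polynomial with H*(0,0) = 0 and H*(0,Y) ≢ 0. Then c₀ is a root of the Newton principal polynomial g(1,Y) = 0, where g(X,Y) = ∑_{(k,l) ∈ L} b_{k,l} X^k Y^l is the sum of the terms b_{k,l}X^kY^l of H* with (k,l) lying on the supporting line L: pk + ql = N, N = min over the support of H* of pk + ql. -/
import Mathlib


open MvPolynomial Filter

/-- If the Puiseux branch X = s^p, Y = ρ(s) = s^q(c₀ + …) satisfies H*(X,Y) = 0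
identically near s = 0, then c₀ is a root of the Newton principal polynomial
g(1,Y) = ∑_{pk+ql = N} b_{k,l} Y^l, where N is the minimum of pk + ql over the
support of H*. -/
theorem stmt_11 (Hs : MvPolynomial (Fin 2) ℂ) (p q : ℕ) (hp : 1 ≤ p) (hq : 1 ≤ q)
    (c : ℂ → ℂ) (hc : AnalyticAt ℂ c 0) (c₀ : ℂ) (hc₀ : c 0 = c₀) (hc₀ne : c₀ ≠ 0)
    (h00 : eval ![0, 0] Hs = 0)
    (h0Y : ∃ Y : ℂ, eval ![0, Y] Hs ≠ 0)
    (hzero : ∀ᶠ s in nhds (0 : ℂ), eval ![s ^ p, s ^ q * c s] Hs = 0)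
    (N : ℕ)
    (hNle : ∀ d ∈ Hs.support, N ≤ p * d 0 + q * d 1)
    (hNmem : ∃ d ∈ Hs.support, p * d 0 + q * d 1 = N) :
    ∑ d ∈ Hs.support.filter (fun d => p * d 0 + q * d 1 = N),
      coeff d Hs * c₀ ^ (d 1) = 0 := by
  set g : ℂ → ℂ := fun s =>
    ∑ d ∈ Hs.support, coeff d Hs * s ^ (p * d 0 + q * d 1 - N) * (c s) ^ (d 1) with hg
  have hgc : ContinuousAt g 0 := by
    apply tendsto_finset_sum
    intro d _
    exact (continuousAt_const.mul (continuousAt_pow _ _)).mul (hc.continuousAt.pow _)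
  -- eval = s^N * g s
  have hkey : ∀ s : ℂ, eval ![s ^ p, s ^ q * c s] Hs = s ^ N * g s := by
    intro s
    rw [eval_eq', hg, Finset.mul_sum]
    apply Finset.sum_congr rfl
    intro d hd
    rw [Fin.prod_univ_two]
    simp only [Matrix.cons_val_zero, Matrix.cons_val_one, Matrix.head_cons]
    have he : (s ^ p) ^ (d 0) * (s ^ q * c s) ^ (d 1)
        = s ^ N * s ^ (p * d 0 + q * d 1 - N) * (c s) ^ (d 1) := by
      rw [mul_pow, ← pow_mul, ← pow_mul, ← mul_assoc, ← pow_add, ← pow_add,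
        Nat.add_sub_cancel' (hNle d hd)]
    rw [he]; ring
  -- g s = 0 for s ≠ 0 near 0
  have hpunct : Tendsto g (nhdsWithin (0 : ℂ) {(0 : ℂ)}ᶜ) (nhds 0) := by
    have : g =ᶠ[nhdsWithin (0 : ℂ) {(0 : ℂ)}ᶜ] fun _ => 0 := by
      filter_upwards [nhdsWithin_le_nhds hzero, self_mem_nhdsWithin] with s hs hs0
      have := hkey s
      rw [hs] at this
      exact (mul_eq_zero.mp this.symm).resolve_left (pow_ne_zero _ hs0)
    exact Tendsto.congr' this.symm tendsto_const_nhds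
  have hg0 : g 0 = 0 :=
    tendsto_nhds_unique (hgc.tendsto.mono_left nhdsWithin_le_nhds) hpunct
  rw [← hg0, hg]
  rw [Finset.sum_filter]
  apply Finset.sum_congr rfl
  intro d hd
  by_cases h : p * d 0 + q * d 1 = N
  · simp [h, hc₀]
  · have hlt : 0 < p * d 0 + q * d 1 - N :=
      Nat.sub_pos_of_lt (lt_of_le_of_ne (hNle d hd) (Ne.symm h))
    simp [h, zero_pow hlt.ne']
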